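/- arXiv:2301.01734 — 3 statements merged into one kernel-verified Lean document; each statement's English description precedes it below -/
import Mathlib

section
/- Let M ∈ ℂ^{N×N} be a Hermitian Toeplitz matrix, determined by m_k := M_{k+1,1} for 0 ≤ k ≤ N−1 and m_{−k} := conj(m_k), so that M_{a,b} = m_{a−b}. Define the spectral function f(θ) = Σ_{k=−(N−1)}^{N−1} m_k e^{−ikθ}. Then the spectral norm satisfies ‖M‖₂ ≤ sup_{θ ∈ [−π,π]} |f(θ)|. -/
/-!
With `g_x(θ) = ∑_b x_b e^{-ibθ}`, orthogonality of the exponentials on `[-π, π]` gives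
`2π ⟪y, M x⟫ = ∫ f · conj g_y · g_x` and Parseval `2π ‖x‖² = ∫ |g_x|²`: `M` is the compression of
multiplication by the symbol `f` to trigonometric polynomials. Hence, by `|g_y g_x| ≤ (|g_x|² + |g_y|²)/2`,
`|⟪y, M x⟫| ≤ sup |f|` for unit vectors `x`, `y`, which bounds the operator norm.
-/

open Matrix

noncomputable section

/-- Spectral norm (largest singular value) of a complex matrix, realized as the operator
norm of the induced linear map between Euclidean spaces. -/
def specNorm {m n : ℕ} (A : Matrix (Fin m) (Fin n) ℂ) : ℝ :=
  ‖LinearMap.toContinuousLinearMap (Matrix.toEuclideanLin A)‖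

end

open Complex Real

noncomputable section

def fourierMode (n : ℤ) (θ : ℝ) : ℂ := exp (-I * n * θ)

@[fun_prop]
lemma continuous_fourierMode (n : ℤ) : Continuous (fourierMode n) := by
  unfold fourierMode
  fun_prop

lemma fourierMode_add (m n : ℤ) (θ : ℝ) :
    fourierMode (m + n) θ = fourierMode m θ * fourierMode n θ := by
  simp only [fourierMode, ← Complex.exp_add]
  push_cast
  ring_nf

lemma conj_fourierMode (n : ℤ) (θ : ℝ) :
    (starRingEnd ℂ) (fourierMode n θ) = fourierMode (-n) θ := by
  simp [fourierMode, ← Complex.exp_conj]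

lemma integral_fourierMode (n : ℤ) :
    ∫ θ in -π..π, fourierMode n θ = if n = 0 then (2 * π : ℂ) else 0 := by
  split_ifs with hn
  · simp [hn, fourierMode, two_mul]
  have hc : -I * n ≠ 0 := by simp [I_ne_zero, hn]
  simp only [fourierMode, integral_exp_mul_complex hc]
  rw [div_eq_zero_iff, sub_eq_zero]
  left
  rw [show -I * n * ((-π : ℝ) : ℂ) = -I * n * π + n * (2 * π * I) by push_cast; ring,
    Complex.exp_add, exp_int_mul_two_pi_mul_I, mul_one]

def fourierPoly (S : Finset ℤ) (c : ℤ → ℂ) (θ : ℝ) : ℂ := ∑ k ∈ S, c k * fourierMode k θ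

def vecFourier {N : ℕ} (x : EuclideanSpace ℂ (Fin N)) (θ : ℝ) : ℂ :=
  ∑ b, x b * fourierMode b θ

/-- The `N × N` Toeplitz matrix with symbol `fourierPoly S c`. -/
def toeplitzOfSymbol (N : ℕ) (S : Finset ℤ) (c : ℤ → ℂ) : Matrix (Fin N) (Fin N) ℂ :=
  Matrix.of fun a b => if (a : ℤ) - b ∈ S then c (a - b) else 0

variable {N : ℕ}

@[fun_prop]
lemma continuous_vecFourier (x : EuclideanSpace ℂ (Fin N)) : Continuous (vecFourier x) := by
  unfold vecFourier; fun_prop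

@[fun_prop]
lemma continuous_fourierPoly (S : Finset ℤ) (c : ℤ → ℂ) : Continuous (fourierPoly S c) := by
  unfold fourierPoly; fun_prop

lemma inner_toEuclideanLin {𝕜 ι κ : Type*} [RCLike 𝕜] [Fintype ι] [Fintype κ] [DecidableEq κ]
    (A : Matrix ι κ 𝕜) (x : EuclideanSpace 𝕜 κ) (y : EuclideanSpace 𝕜 ι) :
    inner 𝕜 y (toEuclideanLin A x) = ∑ a, ∑ b, (starRingEnd 𝕜) (y a) * (A a b * x b) := by
  simp [EuclideanSpace.inner_eq_star_dotProduct, dotProduct, Matrix.mulVec, Finset.mul_sum,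
    mul_comm]

lemma fourierPoly_mul_conj_mul (S : Finset ℤ) (c : ℤ → ℂ) (x y : EuclideanSpace ℂ (Fin N))
    (θ : ℝ) :
    fourierPoly S c θ * ((starRingEnd ℂ) (vecFourier y θ) * vecFourier x θ) =
      ∑ k ∈ S, ∑ a, ∑ b, c k * (starRingEnd ℂ) (y a) * x b * fourierMode (k - a + b) θ := by
  simp only [fourierPoly, vecFourier, map_sum, map_mul, conj_fourierMode, fourierMode_add,
    sub_eq_add_neg]
  rw [Finset.sum_mul_sum, Finset.sum_mul]
  refine Finset.sum_congr rfl fun k _ => ?_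
  rw [Finset.mul_sum]
  refine Finset.sum_congr rfl fun a _ => ?_
  rw [Finset.mul_sum]
  refine Finset.sum_congr rfl fun b _ => by ring

lemma sum_mul_ite_sub_add_eq_zero (S : Finset ℤ) (c : ℤ → ℂ) (a b : ℤ) (u v : ℂ) :
    ∑ k ∈ S, c k * u * v * (if k - a + b = 0 then (2 * π : ℂ) else 0) =
      2 * π * (u * ((if a - b ∈ S then c (a - b) else 0) * v)) := by
  have hk : ∀ k : ℤ, k - a + b = 0 ↔ a - b = k := fun k => by omega
  simp only [hk, mul_ite, mul_zero, Finset.sum_ite_eq, ite_mul, zero_mul]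
  split_ifs <;> ring

theorem integral_fourierPoly_mul_conj_mul (S : Finset ℤ) (c : ℤ → ℂ)
    (x y : EuclideanSpace ℂ (Fin N)) :
    ∫ θ in -π..π, fourierPoly S c θ * ((starRingEnd ℂ) (vecFourier y θ) * vecFourier x θ) =
      2 * π * inner ℂ y (toEuclideanLin (toeplitzOfSymbol N S c) x) := by
  simp_rw [fourierPoly_mul_conj_mul]
  simp (disch := exact fun _ _ => Continuous.intervalIntegrable (by fun_prop) _ _) only
    [intervalIntegral.integral_finsetSum, intervalIntegral.integral_const_mul, integral_fourierMode]
  rw [inner_toEuclideanLin, Finset.mul_sum, Finset.sum_comm]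
  refine Finset.sum_congr rfl fun a _ => ?_
  rw [Finset.sum_comm, Finset.mul_sum]
  exact Finset.sum_congr rfl fun b _ => sum_mul_ite_sub_add_eq_zero S c a b _ _

lemma toeplitzOfSymbol_singleton_zero_one : toeplitzOfSymbol N {0} 1 = 1 := by
  ext a b
  simp [toeplitzOfSymbol, Matrix.one_apply, sub_eq_zero, Fin.val_inj]

lemma fourierPoly_singleton_zero_one (θ : ℝ) : fourierPoly {0} 1 θ = 1 := by
  simp [fourierPoly, fourierMode]

theorem integral_norm_vecFourier_sq (x : EuclideanSpace ℂ (Fin N)) :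
    ∫ θ in -π..π, ‖vecFourier x θ‖ ^ 2 = 2 * π * ‖x‖ ^ 2 := by
  have := integral_fourierPoly_mul_conj_mul {0} 1 x x
  simp only [fourierPoly_singleton_zero_one, one_mul, conj_mul', ← ofReal_pow,
    intervalIntegral.integral_ofReal, toeplitzOfSymbol_singleton_zero_one] at this
  rw [toLpLin_one, LinearMap.id_apply, inner_self_eq_norm_sq_to_K] at this
  exact ofReal_injective (by push_cast at this ⊢; exact this)

theorem norm_inner_toeplitzOfSymbol_le {S : Finset ℤ} {c : ℤ → ℂ} {C : ℝ}
    (hC : ∀ θ ∈ Set.Icc (-π) π, ‖fourierPoly S c θ‖ ≤ C) (x y : EuclideanSpace ℂ (Fin N)) :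
    ‖inner ℂ y (toEuclideanLin (toeplitzOfSymbol N S c) x)‖ ≤ C * ((‖x‖ ^ 2 + ‖y‖ ^ 2) / 2) := by
  have hpi : 0 < 2 * π := by positivity
  have hpointwise : ∀ θ ∈ Set.Icc (-π) π,
      ‖fourierPoly S c θ * ((starRingEnd ℂ) (vecFourier y θ) * vecFourier x θ)‖ ≤
        C * ((‖vecFourier x θ‖ ^ 2 + ‖vecFourier y θ‖ ^ 2) / 2) := fun θ hθ => by
    rw [norm_mul, norm_mul, RCLike.norm_conj]
    have := two_mul_le_add_sq ‖vecFourier y θ‖ ‖vecFourier x θ‖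
    gcongr
    · exact (norm_nonneg _).trans (hC θ hθ)
    · exact hC θ hθ
    · linarith
  refine le_of_mul_le_mul_left ?_ hpi
  calc 2 * π * ‖inner ℂ y (toEuclideanLin (toeplitzOfSymbol N S c) x)‖
      = ‖∫ θ in -π..π, fourierPoly S c θ *
          ((starRingEnd ℂ) (vecFourier y θ) * vecFourier x θ)‖ := by
        rw [integral_fourierPoly_mul_conj_mul, norm_mul]
        simp [abs_of_pos pi_pos]
    _ ≤ ∫ θ in -π..π, C * ((‖vecFourier x θ‖ ^ 2 + ‖vecFourier y θ‖ ^ 2) / 2) :=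
        intervalIntegral.norm_integral_le_of_norm_le (by linarith [pi_pos])
          (MeasureTheory.ae_of_all _ fun θ hθ => hpointwise θ (Set.Ioc_subset_Icc_self hθ))
          ((by fun_prop : Continuous _).intervalIntegrable _ _)
    _ = 2 * π * (C * ((‖x‖ ^ 2 + ‖y‖ ^ 2) / 2)) := by
        rw [intervalIntegral.integral_const_mul, intervalIntegral.integral_div,
          intervalIntegral.integral_add, integral_norm_vecFourier_sq, integral_norm_vecFourier_sq]
        · ring
        all_goals exact (by fun_prop : Continuous _).intervalIntegrable _ _

theorem specNorm_toeplitzOfSymbol_le {S : Finset ℤ} {c : ℤ → ℂ} {C : ℝ}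
    (hC : ∀ θ ∈ Set.Icc (-π) π, ‖fourierPoly S c θ‖ ≤ C) :
    specNorm (toeplitzOfSymbol N S c) ≤ C := by
  have hC₀ : 0 ≤ C := (norm_nonneg _).trans (hC 0 ⟨by linarith [pi_pos], pi_pos.le⟩)
  refine ContinuousLinearMap.opNorm_le_of_re_inner_le hC₀ fun x y hx hy => ?_
  calc _ ≤ ‖inner ℂ y (toEuclideanLin (toeplitzOfSymbol N S c) x)‖ := by
        rw [← inner_conj_symm]
        exact (RCLike.re_le_norm _).trans_eq (RCLike.norm_conj _)
    _ ≤ C := by simpa [hx, hy] using norm_inner_toeplitzOfSymbol_le hC x y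

end

theorem hermitian_toeplitz_specNorm_le_sup_spectral_function_general
    {N : ℕ} (m : ℤ → ℂ)
    (M : Matrix (Fin N) (Fin N) ℂ)
    (hM : ∀ a b : Fin N, M a b = m ((a : ℤ) - (b : ℤ))) :
    specNorm M ≤ sSup ((fun θ : ℝ => ‖
        (∑ k ∈ Finset.Icc (-((N : ℤ) - 1)) ((N : ℤ) - 1),
          m k * Complex.exp (-Complex.I * (k : ℂ) * (θ : ℂ)))‖) ''
      Set.Icc (-Real.pi) Real.pi) := by
  have hM' : M = toeplitzOfSymbol N (Finset.Icc (-((N : ℤ) - 1)) ((N : ℤ) - 1)) m := by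
    ext a b
    have ha := a.isLt
    have hb := b.isLt
    simp only [toeplitzOfSymbol, of_apply, hM, Finset.mem_Icc]
    rw [if_pos (by omega)]
  rw [hM']
  refine specNorm_toeplitzOfSymbol_le fun θ hθ => le_csSup ?_ ⟨θ, hθ, rfl⟩
  exact (isCompact_Icc.image (continuous_fourierPoly _ m).norm).bddAbove

/-- **Spectral norm of a Hermitian Toeplitz matrix via its spectral function.**
If `M_{a,b} = m_{a-b}` with `m_{-k} = conj (m_k)`, and
`f(θ) = Σ_{k=-(N-1)}^{N-1} m_k e^{-ikθ}`, then `‖M‖₂ ≤ sup_{θ ∈ [-π,π]} |f(θ)|`. -/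
theorem hermitian_toeplitz_specNorm_le_sup_spectral_function
    {N : ℕ} (m : ℤ → ℂ) (hm : ∀ k : ℤ, m (-k) = (starRingEnd ℂ) (m k))
    (M : Matrix (Fin N) (Fin N) ℂ)
    (hM : ∀ a b : Fin N, M a b = m ((a : ℤ) - (b : ℤ))) :
    specNorm M ≤ sSup ((fun θ : ℝ => ‖
        (∑ k ∈ Finset.Icc (-((N : ℤ) - 1)) ((N : ℤ) - 1),
          m k * Complex.exp (-Complex.I * (k : ℂ) * (θ : ℂ)))‖) ''
      Set.Icc (-Real.pi) Real.pi) :=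
  hermitian_toeplitz_specNorm_le_sup_spectral_function_general m M hM
end

section
/- Redundancy coefficient of the nested array: Let P ≥ 4 and consider the nested array 𝕊 = 𝕊^{(N₁,N₂)} with N₁ = ⌈P/2⌉ and N₂ = ⌊P/2⌋ ≥ 2, i.e., 𝕊 = {1, …, N₁} ∪ {m(N₁+1) : 1 ≤ m ≤ N₂}. Then its redundancy coefficient satisfies P²/16 ≤ Δ(𝕊) ≤ P². -/
noncomputable section

/-- Weight function of a sparse array given as a finite set of distinct integers:
`|Ω_i| = #{(a,b) ∈ 𝕊 × 𝕊 : a - b = i}`. -/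
def fweight (A : Finset ℤ) (i : ℤ) : ℕ :=
  ((A ×ˢ A).filter (fun p => p.1 - p.2 = i)).card

/-- The generalized nested array `𝕊^{(N₁,N₂)} = {1,…,N₁} ∪ {m(N₁+1) : 1 ≤ m ≤ N₂}`. -/
def nestedArray (N₁ N₂ : ℕ) : Finset ℤ :=
  Finset.Icc (1 : ℤ) (N₁ : ℤ) ∪ (Finset.Icc (1 : ℤ) (N₂ : ℤ)).image (fun m => m * ((N₁ : ℤ) + 1))

end

/-! Every lag `0 ≤ i < N₂(N₁ + 1)` is a difference of two sensors, so each weight in `Δ` is at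
least `1` and `Δ` is at most the number of lags, which is `≤ P²`. The weights count disjoint sets
of sensor pairs, so they sum to at most `P²`, and Cauchy–Schwarz gives
`Δ ≥ (number of lags)² / P² ≥ P² / 16` because `P² ≤ 4 N₂ (N₁ + 1)`. -/

open Finset

theorem fweight_sub_pos {A : Finset ℤ} {a b : ℤ} (ha : a ∈ A) (hb : b ∈ A) :
    0 < fweight A (a - b) :=
  card_pos.2 ⟨(a, b), mem_filter.2 ⟨mem_product.2 ⟨ha, hb⟩, rfl⟩⟩

theorem sum_fweight_le_card_sq {ι : Type*} (A : Finset ℤ) (s : Finset ι) {f : ι → ℤ}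
    (hf : Set.InjOn f s) : ∑ i ∈ s, fweight A (f i) ≤ #A ^ 2 := by
  classical
  calc ∑ i ∈ s, fweight A (f i) = ∑ j ∈ s.image f, fweight A j := (sum_image hf).symm
    _ = #{p ∈ A ×ˢ A | p.1 - p.2 ∈ s.image f} := sum_card_fiberwise_eq_card_filter _ _ _
    _ ≤ #(A ×ˢ A) := card_filter_le _ _
    _ = #A ^ 2 := by rw [card_product, sq]

theorem card_sq_div_card_sq_le_sum_inv_fweight {ι : Type*} (A : Finset ℤ) (s : Finset ι)
    {f : ι → ℤ} (hf : Set.InjOn f s) (hpos : ∀ i ∈ s, 0 < fweight A (f i)) :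
    (#s : ℝ) ^ 2 / (#A : ℝ) ^ 2 ≤ ∑ i ∈ s, 1 / (fweight A (f i) : ℝ) := by
  rcases s.eq_empty_or_nonempty with rfl | hs
  · simp
  have hpos' : ∀ i ∈ s, (0 : ℝ) < fweight A (f i) := fun i hi => by exact_mod_cast hpos i hi
  have hsum_pos : (0 : ℝ) < ∑ i ∈ s, (fweight A (f i) : ℝ) := sum_pos hpos' hs
  have hsum_le : ∑ i ∈ s, (fweight A (f i) : ℝ) ≤ (#A : ℝ) ^ 2 := by
    exact_mod_cast sum_fweight_le_card_sq A s hf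
  calc (#s : ℝ) ^ 2 / (#A : ℝ) ^ 2 ≤ (#s : ℝ) ^ 2 / ∑ i ∈ s, (fweight A (f i) : ℝ) :=
        div_le_div_of_nonneg_left (by positivity) hsum_pos hsum_le
    _ = (∑ i ∈ s, (1 : ℝ)) ^ 2 / ∑ i ∈ s, (fweight A (f i) : ℝ) := by simp
    _ ≤ ∑ i ∈ s, (1 : ℝ) ^ 2 / fweight A (f i) := sq_sum_div_le_sum_sq_div s _ hpos'
    _ = ∑ i ∈ s, 1 / (fweight A (f i) : ℝ) := by simp

theorem sum_inv_fweight_le_card {ι : Type*} (A : Finset ℤ) (s : Finset ι) {f : ι → ℤ}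
    (hpos : ∀ i ∈ s, 0 < fweight A (f i)) :
    ∑ i ∈ s, 1 / (fweight A (f i) : ℝ) ≤ #s := by
  simpa using sum_le_card_nsmul s (fun i => 1 / (fweight A (f i) : ℝ)) 1 fun i hi =>
    div_le_one_of_le₀ (by exact_mod_cast hpos i hi) (Nat.cast_nonneg _)

section NestedArray

variable {N₁ N₂ : ℕ}

theorem mem_nestedArray_of_le {x : ℤ} (h₁ : 1 ≤ x) (h₂ : x ≤ N₁) : x ∈ nestedArray N₁ N₂ :=
  mem_union_left _ (mem_Icc.2 ⟨h₁, h₂⟩)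

theorem mul_mem_nestedArray {m : ℤ} (h₁ : 1 ≤ m) (h₂ : m ≤ N₂) :
    m * (N₁ + 1) ∈ nestedArray N₁ N₂ :=
  mem_union_right _ (mem_image_of_mem _ (mem_Icc.2 ⟨h₁, h₂⟩))

variable (N₁ N₂)

theorem card_nestedArray : #(nestedArray N₁ N₂) = N₁ + N₂ := by
  have hdisj : Disjoint (Icc (1 : ℤ) N₁) ((Icc (1 : ℤ) N₂).image (· * ((N₁ : ℤ) + 1))) := by
    refine disjoint_left.2 fun x hx hx' => ?_
    obtain ⟨m, hm, rfl⟩ := mem_image.1 hx'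
    rw [mem_Icc] at hx hm
    nlinarith
  rw [nestedArray, card_union_of_disjoint hdisj, Int.card_Icc,
    card_image_of_injective _ (mul_left_injective₀ (by positivity : ((N₁ : ℤ) + 1) ≠ 0)),
    Int.card_Icc]
  omega

/-- The nested array is hole-free: writing `i = q (N₁ + 1) + r` with `0 ≤ r ≤ N₁`, `i` is the
difference of `(q + 1)(N₁ + 1)` and `N₁ + 1 - r`. -/
theorem fweight_nestedArray_pos {i : ℕ} (hi : i < N₂ * (N₁ + 1)) :
    0 < fweight (nestedArray N₁ N₂) i := by
  obtain ⟨q, r, hr, hq, rfl⟩ : ∃ q r, r < N₁ + 1 ∧ q < N₂ ∧ (N₁ + 1) * q + r = i :=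
    ⟨i / (N₁ + 1), i % (N₁ + 1), Nat.mod_lt _ N₁.succ_pos,
      (Nat.div_lt_iff_lt_mul N₁.succ_pos).2 hi, Nat.div_add_mod i (N₁ + 1)⟩
  have hhigh : ((q : ℤ) + 1) * (N₁ + 1) ∈ nestedArray N₁ N₂ :=
    mul_mem_nestedArray (by omega) (by omega)
  have hlow : (N₁ : ℤ) + 1 - r ∈ nestedArray N₁ N₂ := by
    rcases Nat.eq_zero_or_pos r with hr0 | hr0
    · simpa [hr0] using mul_mem_nestedArray (N₁ := N₁) (m := 1) le_rfl (by omega)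
    · exact mem_nestedArray_of_le (by omega) (by omega)
  have hdiff : ((q : ℤ) + 1) * (N₁ + 1) - (N₁ + 1 - r) = ((N₁ + 1) * q + r : ℕ) := by
    push_cast; ring
  simpa [hdiff] using fweight_sub_pos hhigh hlow

end NestedArray

theorem sq_le_four_mul_and_le_sq {P : ℕ} (hP : 2 ≤ P) :
    P ^ 2 ≤ 4 * (P / 2 * ((P + 1) / 2 + 1)) ∧ P / 2 * ((P + 1) / 2 + 1) ≤ P ^ 2 := by
  obtain ⟨k, rfl | rfl⟩ := Nat.even_or_odd' P
  · have h1 : 2 * k / 2 = k := by omega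
    have h2 : (2 * k + 1) / 2 = k := by omega
    rw [h1, h2]; constructor <;> nlinarith
  · have h1 : (2 * k + 1) / 2 = k := by omega
    have h2 : (2 * k + 1 + 1) / 2 = k + 1 := by omega
    rw [h1, h2]; constructor <;> nlinarith

/-- **Redundancy coefficient of the nested array** (Lemma 3, Case II): for `P ≥ 4`,
`N₁ = ⌈P/2⌉`, `N₂ = ⌊P/2⌋ ≥ 2`, the redundancy coefficient
`Δ(𝕊) = Σ_{i=0}^{Mca} 1/|Ω_i|` (with `Mca = N₂(N₁+1) - 1`) satisfies
`P²/16 ≤ Δ(𝕊) ≤ P²`. -/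
theorem nested_redundancy_coefficient (P N₁ N₂ Mca : ℕ) (hP : 4 ≤ P)
    (hN₁ : N₁ = (P + 1) / 2) (hN₂ : N₂ = P / 2) (hMca : Mca = N₂ * (N₁ + 1) - 1) :
    (P : ℝ) ^ 2 / 16 ≤
        ∑ i ∈ Finset.range (Mca + 1), (1 : ℝ) / (fweight (nestedArray N₁ N₂) (i : ℤ)) ∧
    ∑ i ∈ Finset.range (Mca + 1), (1 : ℝ) / (fweight (nestedArray N₁ N₂) (i : ℤ)) ≤
        (P : ℝ) ^ 2 := by
  obtain ⟨hlower, hupper⟩ := sq_le_four_mul_and_le_sq (P := P) (by omega)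
  rw [← hN₁, ← hN₂] at hlower hupper
  set n := N₂ * (N₁ + 1)
  have hMca' : Mca + 1 = n := by
    have : 0 < n := Nat.mul_pos (by omega) N₁.succ_pos
    omega
  have hcard : #(nestedArray N₁ N₂) = P := by rw [card_nestedArray]; omega
  have hinj : Set.InjOn (fun i : ℕ => (i : ℤ)) (range n) := Nat.cast_injective.injOn
  have hpos : ∀ i ∈ range n, 0 < fweight (nestedArray N₁ N₂) i := fun i hi =>
    fweight_nestedArray_pos N₁ N₂ (mem_range.1 hi)
  rw [hMca']
  constructor
  · have hsq : ((P : ℝ) ^ 2) ^ 2 ≤ (4 * n : ℝ) ^ 2 := by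
      gcongr; exact_mod_cast hlower
    calc (P : ℝ) ^ 2 / 16 ≤ (n : ℝ) ^ 2 / (P : ℝ) ^ 2 := by
          rw [div_le_div_iff₀ (by norm_num) (by positivity)]; nlinarith
      _ = (#(range n) : ℝ) ^ 2 / (#(nestedArray N₁ N₂) : ℝ) ^ 2 := by rw [card_range, hcard]
      _ ≤ _ := card_sq_div_card_sq_le_sum_inv_fweight _ _ hinj hpos
  · calc _ ≤ (#(range n) : ℝ) := sum_inv_fweight_le_card _ _ hpos
      _ ≤ (P : ℝ) ^ 2 := by rw [card_range]; exact_mod_cast hupper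
end

section
/- Hole-freeness and coarray size of the nested array: For any integers N₁ ≥ N₂ ≥ 1, the nested array 𝕊^{(N₁,N₂)} = {1, …, N₁} ∪ {m(N₁+1) : 1 ≤ m ≤ N₂} is hole-free with largest difference M_ca = N₂(N₁+1) − 1; that is, its difference set equals {−M_ca, −M_ca+1, …, M_ca}. Moreover, if P ≥ 3, N₁ = ⌈P/2⌉ and N₂ = ⌊P/2⌋, then P²/5 ≤ M_ca + 1 = ⌊P/2⌋(⌈P/2⌉+1) ≤ P². -/
lemma nestedArray_bounds {N₁ N₂ : ℕ} (h₂ : 1 ≤ N₂) {x : ℤ}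
    (hx : x ∈ nestedArray N₁ N₂) : 1 ≤ x ∧ x ≤ (N₂ : ℤ) * ((N₁ : ℤ) + 1) := by
  have hN2 : (1 : ℤ) ≤ (N₂ : ℤ) := by exact_mod_cast h₂
  simp only [nestedArray, Finset.mem_union, Finset.mem_Icc, Finset.mem_image] at hx
  rcases hx with ⟨hx1, hx2⟩ | ⟨m, ⟨hm1, hm2⟩, rfl⟩
  · refine ⟨hx1, hx2.trans ?_⟩
    nlinarith
  · constructor
    · nlinarith
    · have hN1 : (0:ℤ) ≤ (N₁ : ℤ) + 1 := by positivity
      nlinarith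

lemma nestedArray_cover {N₁ N₂ : ℕ} (h₂ : 1 ≤ N₂) (h₁ : N₂ ≤ N₁) {i : ℤ}
    (hi0 : 0 ≤ i) (hiM : i ≤ (N₂ : ℤ) * ((N₁ : ℤ) + 1) - 1) :
    ∃ a ∈ nestedArray N₁ N₂, ∃ b ∈ nestedArray N₁ N₂, a - b = i := by
  have hN2 : (1 : ℤ) ≤ (N₂ : ℤ) := by exact_mod_cast h₂
  set c : ℤ := (N₁ : ℤ) + 1 with hc
  have hcpos : 0 < c := by positivity
  set m : ℤ := i / c with hm
  set r : ℤ := i % c with hr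
  have hr0 : 0 ≤ r := Int.emod_nonneg i (by omega)
  have hrlt : r < c := Int.emod_lt_of_pos i hcpos
  have hm0 : 0 ≤ m := Int.ediv_nonneg hi0 (le_of_lt hcpos)
  have hmlt : m < (N₂ : ℤ) := by
    rw [hm, Int.ediv_lt_iff_lt_mul hcpos]
    nlinarith
  have hkey : c * m + r = i := Int.mul_ediv_add_emod i c
  refine ⟨(m + 1) * c, ?_, c - r, ?_, by rw [show (m + 1) * c - (c - r) = c * m + r from by ring]; exact hkey⟩
  · simp only [nestedArray, Finset.mem_union, Finset.mem_Icc, Finset.mem_image]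
    right
    exact ⟨m + 1, ⟨by omega, by omega⟩, rfl⟩
  · simp only [nestedArray, Finset.mem_union, Finset.mem_Icc, Finset.mem_image]
    rcases eq_or_lt_of_le hr0 with h | h
    · right
      exact ⟨1, ⟨le_refl _, hN2⟩, by omega⟩
    · left
      constructor <;> omega

/-- **Hole-freeness and coarray size of the nested array** (Definition 2 / Eq. (3)):
for `N₁ ≥ N₂ ≥ 1` the nested array is hole-free with largest difference
`M_ca = N₂(N₁+1) - 1`, i.e. its difference set is `{-M_ca, …, M_ca}`; moreover if
`P ≥ 3`, `N₁ = ⌈P/2⌉` and `N₂ = ⌊P/2⌋`, then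
`P²/5 ≤ M_ca + 1 = ⌊P/2⌋(⌈P/2⌉+1) ≤ P²`. -/
theorem nested_array_holefree_and_coarray_size (N₁ N₂ : ℕ) (h₂ : 1 ≤ N₂) (h₁ : N₂ ≤ N₁) :
    ({i : ℤ | ∃ a ∈ nestedArray N₁ N₂, ∃ b ∈ nestedArray N₁ N₂, a - b = i}
        = Set.Icc (-((N₂ * (N₁ + 1) : ℤ) - 1)) ((N₂ * (N₁ + 1) : ℤ) - 1)) ∧
    (∀ P : ℕ, 3 ≤ P → N₁ = (P + 1) / 2 → N₂ = P / 2 →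
      (N₂ * (N₁ + 1) : ℤ) = (P / 2 : ℕ) * (((P + 1) / 2 : ℕ) + 1) ∧
      (P : ℝ) ^ 2 / 5 ≤ (N₂ : ℝ) * ((N₁ : ℝ) + 1) ∧
      (N₂ : ℝ) * ((N₁ : ℝ) + 1) ≤ (P : ℝ) ^ 2) := by
  constructor
  · ext i
    simp only [Set.mem_setOf_eq, Set.mem_Icc]
    constructor
    · rintro ⟨a, ha, b, hb, rfl⟩
      obtain ⟨ha1, ha2⟩ := nestedArray_bounds h₂ ha
      obtain ⟨hb1, hb2⟩ := nestedArray_bounds h₂ hb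
      constructor <;> linarith
    · rintro ⟨hlo, hhi⟩
      rcases le_or_gt 0 i with h | h
      · exact nestedArray_cover h₂ h₁ h hhi
      · obtain ⟨a, ha, b, hb, hab⟩ := nestedArray_cover h₂ h₁ (i := -i) (by omega) (by omega)
        exact ⟨b, hb, a, ha, by omega⟩
  · intro P hP hN1 hN2
    subst hN1 hN2
    obtain ⟨k, hk | hk⟩ := Nat.even_or_odd' P
    · subst hk
      have hdiv1 : (2 * k) / 2 = k := by omega
      have hdiv2 : (2 * k + 1) / 2 = k := by omega
      have hk2 : 2 ≤ k := by omega
      have hkR : (2 : ℝ) ≤ (k : ℝ) := by exact_mod_cast hk2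
      simp only [hdiv1, hdiv2]
      refine ⟨by push_cast <;> ring, ?_, ?_⟩ <;> push_cast <;> nlinarith
    · subst hk
      have hdiv1 : (2 * k + 1) / 2 = k := by omega
      have hdiv2 : (2 * k + 1 + 1) / 2 = k + 1 := by omega
      have hk1 : 1 ≤ k := by omega
      have hkR : (1 : ℝ) ≤ (k : ℝ) := by exact_mod_cast hk1
      simp only [hdiv1, hdiv2]
      refine ⟨by push_cast <;> ring, ?_, ?_⟩ <;> push_cast <;> nlinarith
end
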